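/- For every L > R₀ the scattering function f satisfies ∫₀^L (μ f'(r)² + v(r) f(r)²) r² dr ≤ μ 𝔞₀^μ and ∫₀^L f(r)² r² dr ≥ (L − R₀)³/3; consequently ∫₀^L (μ f'(r)² + v(r) f(r)²) r² dr ≤ (3 μ 𝔞₀^μ/(L − R₀)³) · ∫₀^L f(r)² r² dr. (This says that the Rayleigh quotient of f over the ball of radius L, and hence the Neumann ground-state energy of −μΔ + v on that ball, is at most 3 μ 𝔞₀^μ/(L − R₀)³.) -/

import Mathlib

open Set MeasureTheory

/-- A zero-energy scattering solution `m` for the radial potential `v` supported in `[0, R₀]`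
with semiclassical parameter `μ`: it satisfies `μ m'' = v m` on `(0,∞)`, is continuous on
`[0,∞)` and continuously differentiable on `(0,∞)`, with `m(0) = 0`, `m > 0` on `(0,∞)`, and
`m(r) = r - 𝔞₀^μ` for `r ≥ R₀`, where `𝔞₀^μ := R₀ - m(R₀)` is the scattering length. -/
structure ZeroEnergyScattering (v : ℝ → ℝ) (R₀ μ : ℝ) (m : ℝ → ℝ) : Prop where
  cont : ContinuousOn m (Set.Ici 0)
  diff : ∀ r ∈ Set.Ioi (0 : ℝ), DifferentiableAt ℝ m r
  derivCont : ContinuousOn (deriv m) (Set.Ioi 0)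
  diff2 : ∀ r ∈ Set.Ioi (0 : ℝ), DifferentiableAt ℝ (deriv m) r
  ode : ∀ r ∈ Set.Ioi (0 : ℝ), μ * deriv (deriv m) r = v r * m r
  zero : m 0 = 0
  pos : ∀ r ∈ Set.Ioi (0 : ℝ), 0 < m r
  radiation : ∀ r, R₀ ≤ r → m r = r - (R₀ - m R₀)

open Filter Topology

/-!
Writing `f = m / r`, integration by parts turns the energy `∫₀^L (μ f'² + v f²) r² dr` into the
boundary term `μ L² f(L) f'(L) = μ (L - 𝔞) 𝔞 / L ≤ μ 𝔞` (with `𝔞 = 𝔞₀^μ`): the derivative of `μ r² f f'` is exactly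
the energy density, thanks to `μ m'' = v m`, and the boundary term at `0` vanishes because
`|r² f f'| ≤ m`, which follows from `0 ≤ m' ≤ 1` (`m'` increases to its value `1` beyond `R₀`)
and `0 ≤ m ≤ r`. The mass bound comes from `m(r) = r - 𝔞 ≥ r - R₀` on `[R₀, L]`.
-/

theorem integral_Ioc_eq_sub_of_hasDerivAt_of_nonneg {g g' : ℝ → ℝ} {a b : ℝ} (hab : a ≤ b)
    (hcont : ContinuousOn g (Icc a b)) (hderiv : ∀ x ∈ Ioo a b, HasDerivAt g (g' x) x)
    (hpos : ∀ x ∈ Ioo a b, 0 ≤ g' x) : ∫ x in Ioc a b, g' x = g b - g a := by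
  rw [← intervalIntegral.integral_of_le hab]
  exact intervalIntegral.integral_eq_sub_of_hasDerivAt_of_le hab hcont hderiv
    ((intervalIntegrable_iff_integrableOn_Ioc_of_le hab).2
      (intervalIntegral.integrableOn_deriv_of_nonneg hcont hderiv hpos))

namespace ZeroEnergyScattering

variable {v : ℝ → ℝ} {R₀ μ : ℝ} {m : ℝ → ℝ}

theorem deriv_eq_one (hm : ZeroEnergyScattering v R₀ μ m) {r : ℝ} (hr : R₀ < r) :
    deriv m r = 1 := by
  have hm_eq : m =ᶠ[𝓝 r] fun x => x - (R₀ - m R₀) :=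
    eventually_of_mem (Ioi_mem_nhds hr) fun x hx => hm.radiation x (le_of_lt hx)
  rw [hm_eq.deriv_eq, deriv_sub_const, deriv_id'']

section Monotone

variable (hm : ZeroEnergyScattering v R₀ μ m) (hμ : 0 < μ) (hv : ∀ r, 0 ≤ v r)
include hm hμ hv

theorem monotoneOn_deriv : MonotoneOn (deriv m) (Ioi 0) := by
  refine monotoneOn_of_deriv_nonneg (convex_Ioi 0) hm.derivCont ?_ ?_ <;> rw [interior_Ioi]
  · exact fun x hx => (hm.diff2 x hx).differentiableWithinAt
  · intro x hx
    have h : 0 ≤ μ * deriv (deriv m) x := hm.ode x hx ▸ mul_nonneg (hv x) (hm.pos x hx).le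
    exact (mul_nonneg_iff_of_pos_left hμ).1 h

theorem deriv_le_one {r : ℝ} (hr : 0 < r) : deriv m r ≤ 1 := by
  have hs : r ≤ max r R₀ + 1 := (le_max_left r R₀).trans (le_add_of_nonneg_right zero_le_one)
  calc deriv m r ≤ deriv m (max r R₀ + 1) :=
        hm.monotoneOn_deriv hμ hv hr (hr.trans_le hs) hs
    _ = 1 := hm.deriv_eq_one (lt_add_of_le_of_pos (le_max_right r R₀) zero_lt_one)

theorem deriv_nonneg {s : ℝ} (hs : 0 < s) : 0 ≤ deriv m s := by
  by_contra! hneg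
  have hanti : AntitoneOn m (Icc 0 s) := by
    refine antitoneOn_of_deriv_nonpos (convex_Icc 0 s) (hm.cont.mono Icc_subset_Ici_self) ?_ ?_
      <;> rw [interior_Icc]
    · exact fun x hx => (hm.diff x hx.1).differentiableWithinAt
    · exact fun x hx => (hm.monotoneOn_deriv hμ hv hx.1 hs hx.2.le).trans hneg.le
  have h := hanti (left_mem_Icc.2 hs.le) (right_mem_Icc.2 hs.le) hs.le
  linarith [hm.pos s hs, hm.zero]

theorem apply_le_self {r : ℝ} (hr : 0 ≤ r) : m r ≤ r := by
  have h := (convex_Ici (0 : ℝ)).image_sub_le_mul_sub_of_deriv_le hm.cont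
    (by rw [interior_Ici]; exact fun x hx => (hm.diff x hx).differentiableWithinAt)
    (by rw [interior_Ici]; exact fun x hx => hm.deriv_le_one hμ hv hx) 0 self_mem_Ici r hr hr
  simpa [hm.zero] using h

theorem scatteringLength_nonneg (hR₀ : 0 < R₀) : 0 ≤ R₀ - m R₀ :=
  sub_nonneg.2 (hm.apply_le_self hμ hv hR₀.le)

end Monotone

/-- The flux `μ r² f f'` of `f = m / r`, written in terms of `m`. -/
noncomputable def flux (μ : ℝ) (m : ℝ → ℝ) (r : ℝ) : ℝ := μ * (m r * deriv m r - m r ^ 2 / r)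

theorem hasDerivAt_flux (hm : ZeroEnergyScattering v R₀ μ m) {x : ℝ} (hx : 0 < x) :
    HasDerivAt (flux μ m)
      ((μ * (deriv (fun s => m s / s) x) ^ 2 + v x * (m x / x) ^ 2) * x ^ 2) x := by
  have hdm : HasDerivAt m (deriv m x) x := (hm.diff x hx).hasDerivAt
  have hdm2 : HasDerivAt (deriv m) (deriv (deriv m) x) x := (hm.diff2 x hx).hasDerivAt
  have hf' : deriv (fun s => m s / s) x = (deriv m x * x - m x) / x ^ 2 := by
    have h : HasDerivAt (fun s => m s / s) ((deriv m x * x - m x * 1) / x ^ 2) x :=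
      hdm.div (hasDerivAt_id' x) hx.ne'
    rw [h.deriv, mul_one]
  have hflux : HasDerivAt (flux μ m) (μ * (deriv m x * deriv m x + m x * deriv (deriv m) x -
      (2 * m x ^ (2 - 1) * deriv m x * x - m x ^ 2 * 1) / x ^ 2)) x :=
    ((hdm.mul hdm2).sub ((hdm.pow 2).div (hasDerivAt_id' x) hx.ne')).const_mul μ
  refine hflux.congr_deriv ?_
  have hode := hm.ode x hx
  rw [hf']
  field_simp
  linear_combination (m x * x ^ 2) * hode

theorem abs_flux_le (hm : ZeroEnergyScattering v R₀ μ m) (hμ : 0 < μ) (hv : ∀ r, 0 ≤ v r)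
    {r : ℝ} (hr : 0 ≤ r) : |flux μ m r| ≤ μ * m r := by
  rcases hr.eq_or_lt with rfl | hr
  · simp [flux, hm.zero]
  have hm0 : 0 ≤ m r := (hm.pos r hr).le
  have hq : m r / r ≤ 1 := (div_le_one hr).2 (hm.apply_le_self hμ hv hr.le)
  have hbracket : |deriv m r - m r / r| ≤ 1 :=
    abs_sub_le_of_nonneg_of_le (hm.deriv_nonneg hμ hv hr) (hm.deriv_le_one hμ hv hr)
      (div_nonneg hm0 hr.le) hq
  have hflux : flux μ m r = μ * m r * (deriv m r - m r / r) := by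
    unfold flux; field_simp
  rw [hflux, abs_mul, abs_of_nonneg (mul_nonneg hμ.le hm0)]
  exact mul_le_of_le_one_right (mul_nonneg hμ.le hm0) hbracket

theorem continuousOn_flux (hm : ZeroEnergyScattering v R₀ μ m) (hμ : 0 < μ)
    (hv : ∀ r, 0 ≤ v r) : ContinuousOn (flux μ m) (Ici 0) := by
  intro x hx
  rcases (mem_Ici.1 hx).eq_or_lt with rfl | hx
  · have hm_lim : Tendsto m (𝓝[Ici 0] 0) (𝓝 0) := by
      simpa only [hm.zero] using (hm.cont 0 self_mem_Ici).tendsto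
    have hflux0 : flux μ m 0 = 0 := by simp [flux, hm.zero]
    rw [ContinuousWithinAt, hflux0]
    refine squeeze_zero_norm' ?_ (by simpa using hm_lim.const_mul μ)
    filter_upwards [self_mem_nhdsWithin] with r hr using hm.abs_flux_le hμ hv hr
  · have hmx : ContinuousAt m x := (hm.diff x hx).continuousAt
    have hdmx : ContinuousAt (deriv m) x := hm.derivCont.continuousAt (Ioi_mem_nhds hx)
    exact (continuousAt_const.mul
      ((hmx.mul hdmx).sub ((hmx.pow 2).div continuousAt_id hx.ne'))).continuousWithinAt

theorem integral_energy_eq_flux (hm : ZeroEnergyScattering v R₀ μ m) (hμ : 0 < μ)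
    (hv : ∀ r, 0 ≤ v r) {L : ℝ} (hL : 0 ≤ L) :
    ∫ r in Ioc 0 L, (μ * (deriv (fun s => m s / s) r) ^ 2 + v r * (m r / r) ^ 2) * r ^ 2
      = flux μ m L := by
  have hflux0 : flux μ m 0 = 0 := by simp [flux, hm.zero]
  rw [integral_Ioc_eq_sub_of_hasDerivAt_of_nonneg hL
    ((hm.continuousOn_flux hμ hv).mono Icc_subset_Ici_self)
    (fun x hx => hm.hasDerivAt_flux hx.1) (fun x _ => by have := hv x; positivity),
    hflux0, sub_zero]

theorem flux_le (hm : ZeroEnergyScattering v R₀ μ m) (hμ : 0 ≤ μ) {L : ℝ} (hL₀ : 0 < L)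
    (hL : R₀ < L) : flux μ m L ≤ μ * (R₀ - m R₀) := by
  set a := R₀ - m R₀
  have hflux : flux μ m L = μ * ((L - a) * a / L) := by
    rw [flux, hm.radiation L hL.le, hm.deriv_eq_one hL]
    field_simp
    ring
  rw [hflux]
  refine mul_le_mul_of_nonneg_left ((div_le_iff₀ hL₀).2 ?_) hμ
  nlinarith [sq_nonneg a]

theorem cube_div_three_le_integral_sq (hm : ZeroEnergyScattering v R₀ μ m) (hR₀ : 0 < R₀)
    {L : ℝ} (hL : R₀ ≤ L) : (L - R₀) ^ 3 / 3 ≤ ∫ r in Ioc 0 L, m r ^ 2 := by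
  have hm_sq : IntegrableOn (fun r => m r ^ 2) (Ioc 0 L) :=
    ((hm.cont.mono Icc_subset_Ici_self).pow 2).integrableOn_Icc.mono_set Ioc_subset_Icc_self
  calc (L - R₀) ^ 3 / 3 = ∫ r in Ioc R₀ L, (r - R₀) ^ 2 := by
        rw [← intervalIntegral.integral_of_le hL,
          intervalIntegral.integral_comp_sub_right (fun x => x ^ 2), integral_pow]
        ring
    _ ≤ ∫ r in Ioc R₀ L, m r ^ 2 := by
        refine setIntegral_mono_on ?_ (hm_sq.mono_set (Ioc_subset_Ioc_left hR₀.le))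
          measurableSet_Ioc fun r hr => ?_
        · exact (((continuous_id.sub continuous_const).pow 2).integrableOn_Icc).mono_set
            Ioc_subset_Icc_self
        · rw [hm.radiation r hr.1.le]
          nlinarith [hr.1, hm.pos R₀ hR₀]
    _ ≤ ∫ r in Ioc 0 L, m r ^ 2 :=
        setIntegral_mono_set hm_sq (ae_of_all _ fun _ => sq_nonneg _)
          (Ioc_subset_Ioc_left hR₀.le).eventuallyLE

end ZeroEnergyScattering

theorem scattering_function_rayleigh_quotient_general
    (R₀ μ : ℝ) (hR₀ : 0 < R₀) (hμ : 0 < μ)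
    (v : ℝ → ℝ) (hv_nonneg : ∀ r, 0 ≤ v r)
    (m : ℝ → ℝ) (hm : ZeroEnergyScattering v R₀ μ m)
    (L : ℝ) (hL : R₀ < L) :
    ((∫ r in Set.Ioc (0 : ℝ) L,
        (μ * (deriv (fun s => m s / s) r) ^ 2 + v r * (m r / r) ^ 2) * r ^ 2)
      ≤ μ * (R₀ - m R₀)) ∧
    ((L - R₀) ^ 3 / 3 ≤ ∫ r in Set.Ioc (0 : ℝ) L, (m r / r) ^ 2 * r ^ 2) ∧
    ((∫ r in Set.Ioc (0 : ℝ) L,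
        (μ * (deriv (fun s => m s / s) r) ^ 2 + v r * (m r / r) ^ 2) * r ^ 2)
      ≤ 3 * μ * (R₀ - m R₀) / (L - R₀) ^ 3 *
          ∫ r in Set.Ioc (0 : ℝ) L, (m r / r) ^ 2 * r ^ 2) := by
  have hL₀ : 0 < L := hR₀.trans hL
  have henergy := (hm.integral_energy_eq_flux hμ hv_nonneg hL₀.le).trans_le
    (hm.flux_le hμ.le hL₀ hL)
  have hmass : (L - R₀) ^ 3 / 3 ≤ ∫ r in Ioc 0 L, (m r / r) ^ 2 * r ^ 2 := by
    rw [setIntegral_congr_fun measurableSet_Ioc fun r hr => by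
      simp only [div_pow]; exact div_mul_cancel₀ _ (pow_ne_zero 2 hr.1.ne')]
    exact hm.cube_div_three_le_integral_sq hR₀ hL.le
  refine ⟨henergy, hmass, ?_⟩
  have hcube : 0 < (L - R₀) ^ 3 := pow_pos (sub_pos.2 hL) 3
  have ha := hm.scatteringLength_nonneg hμ hv_nonneg hR₀
  have hLR : L - R₀ ≠ 0 := (sub_pos.2 hL).ne'
  calc _ ≤ μ * (R₀ - m R₀) := henergy
    _ = 3 * μ * (R₀ - m R₀) / (L - R₀) ^ 3 * ((L - R₀) ^ 3 / 3) := by field_simp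
    _ ≤ _ := mul_le_mul_of_nonneg_left hmass (by positivity)

/-- **Rayleigh quotient bound on balls.**  For every `L > R₀` the scattering function
`f(r) = m(r)/r` satisfies `∫₀^L (μ f'² + v f²) r² dr ≤ μ 𝔞₀^μ` and
`∫₀^L f² r² dr ≥ (L - R₀)³/3`; consequently the Rayleigh quotient of `f` on the ball of
radius `L` (hence the Neumann ground-state energy of `-μΔ + v` there) is at most
`3 μ 𝔞₀^μ/(L - R₀)³`. -/
theorem scattering_function_rayleigh_quotient
    (R₀ μ : ℝ) (hR₀ : 0 < R₀) (hμ : 0 < μ)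
    (v : ℝ → ℝ) (hv_meas : Measurable v) (hv_nonneg : ∀ r, 0 ≤ v r)
    (hv_bdd : BddAbove (Set.range v))
    (hv_supp : ∀ r, R₀ ≤ r → v r = 0)
    (m : ℝ → ℝ) (hm : ZeroEnergyScattering v R₀ μ m)
    (L : ℝ) (hL : R₀ < L) :
    ((∫ r in Set.Ioc (0 : ℝ) L,
        (μ * (deriv (fun s => m s / s) r) ^ 2 + v r * (m r / r) ^ 2) * r ^ 2)
      ≤ μ * (R₀ - m R₀)) ∧
    ((L - R₀) ^ 3 / 3 ≤ ∫ r in Set.Ioc (0 : ℝ) L, (m r / r) ^ 2 * r ^ 2) ∧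
    ((∫ r in Set.Ioc (0 : ℝ) L,
        (μ * (deriv (fun s => m s / s) r) ^ 2 + v r * (m r / r) ^ 2) * r ^ 2)
      ≤ 3 * μ * (R₀ - m R₀) / (L - R₀) ^ 3 *
          ∫ r in Set.Ioc (0 : ℝ) L, (m r / r) ^ 2 * r ^ 2) :=
  scattering_function_rayleigh_quotient_general R₀ μ hR₀ hμ v hv_nonneg m hm L hL
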